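/- arXiv:1510.07362 — 11 statements merged into one kernel-verified Lean document; each statement's English description precedes it below -/
import Mathlib

section
/- For every positive integer a and every s ≥ 2, the consecutive values of τ satisfy |τ_s(a) − τ_{s−1}(a)| ≤ 1. -/
/-!
Writing `x = √a` and `y = √(a+1)`, the integers counted by `τ_s(a)` are those strictly between
`s x` and `s y`, so `τ_s(a) = ⌈s y⌉ - ⌊s x⌋ - 1`. Passing from `s - 1` to `s` adds `y` and `x`,
which moves `⌈·y⌉` by `⌈y⌉` or `⌈y⌉ - 1` and `⌊·x⌋` by `⌊x⌋` or `⌊x⌋ + 1`. Since no integer lies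
strictly between `√a` and `√(a+1)`, `⌈y⌉ = ⌊x⌋ + 1`, so the count changes by at most one.
-/

noncomputable def tauN (s a : ℕ) : ℕ := {t : ℕ | 0 < t ∧ s^2 * a < t^2 ∧ t^2 < s^2 * (a+1)}.ncard

open Real

lemma ncard_setOf_lt_natCast_lt {x y : ℝ} (hx : 0 ≤ x) (hxy : x < y) :
    ({t : ℕ | x < t ∧ t < y}.ncard : ℤ) = ⌈y⌉ - ⌊x⌋ - 1 := by
  have hset : {t : ℕ | x < t ∧ t < y} = ↑(Finset.Ioo ⌊x⌋₊ ⌈y⌉₊) := by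
    ext t
    simp [Nat.floor_lt hx, Nat.lt_ceil]
  have hlt : ⌊x⌋₊ < ⌈y⌉₊ := Nat.floor_lt_ceil_of_lt_of_pos hxy (hx.trans_lt hxy)
  rw [hset, Set.ncard_coe_finset, Nat.card_Ioo, Nat.cast_sub (by omega), Nat.cast_sub hlt.le,
    Int.natCast_ceil_eq_ceil (hx.trans hxy.le), Int.natCast_floor_eq_floor hx, Nat.cast_one]

lemma natCast_mul_sqrt_lt_iff (s n t : ℕ) : (s * √n : ℝ) < t ↔ s ^ 2 * n < t ^ 2 := by
  rw [← pow_lt_pow_iff_left₀ (by positivity) (by positivity) two_ne_zero, mul_pow,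
    sq_sqrt (by positivity)]
  exact_mod_cast Iff.rfl

lemma lt_natCast_mul_sqrt_iff (s n t : ℕ) : (t : ℝ) < s * √n ↔ t ^ 2 < s ^ 2 * n := by
  rw [← pow_lt_pow_iff_left₀ (by positivity) (by positivity) two_ne_zero, mul_pow,
    sq_sqrt (by positivity)]
  exact_mod_cast Iff.rfl

lemma tauN_eq_ceil_sub_floor (a : ℕ) {s : ℕ} (hs : 0 < s) :
    (tauN s a : ℤ) = ⌈s * √(a + 1 : ℕ)⌉ - ⌊s * √a⌋ - 1 := by
  have hset : {t : ℕ | 0 < t ∧ s^2 * a < t^2 ∧ t^2 < s^2 * (a+1)}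
      = {t : ℕ | (s * √a : ℝ) < t ∧ t < s * √(a + 1 : ℕ)} := by
    ext t
    simp only [Set.mem_ofPred_eq, natCast_mul_sqrt_lt_iff, lt_natCast_mul_sqrt_iff]
    exact ⟨fun h ↦ h.2, fun h ↦ ⟨pos_of_ne_zero (by rintro rfl; simp at h), h⟩⟩
  rw [tauN, hset, ncard_setOf_lt_natCast_lt (by positivity)]
  gcongr
  exact_mod_cast a.lt_succ_self

lemma ceil_sqrt_succ_eq_floor_sqrt_add_one (a : ℕ) : ⌈√(a + 1 : ℕ)⌉ = ⌊√a⌋ + 1 := by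
  rw [floor_real_sqrt_eq_nat_sqrt, Int.ceil_eq_iff]
  push_cast
  constructor
  · rw [add_sub_cancel_right]
    exact nat_sqrt_le_real_sqrt.trans_lt (sqrt_lt_sqrt (by positivity) (by linarith))
  · rw [sqrt_le_left (by positivity)]
    exact_mod_cast a.lt_succ_sqrt'

lemma abs_ceil_add_sub_floor_add_sub_le_one {x y : ℝ} (hxy : ⌈y⌉ = ⌊x⌋ + 1) (p q : ℝ) :
    |(⌈p + y⌉ - ⌊q + x⌋) - (⌈p⌉ - ⌊q⌋)| ≤ 1 := by
  have := Int.ceil_add_le p y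
  have := Int.ceil_add_ceil_le p y
  have := Int.le_floor_add q x
  have := Int.le_floor_add_floor q x
  rw [abs_le]
  constructor <;> linarith

theorem stmt_4_general (a s : ℕ) (hs : 2 ≤ s) :
    |(tauN s a : ℤ) - (tauN (s-1) a : ℤ)| ≤ 1 := by
  obtain ⟨r, rfl⟩ : ∃ r, s = r + 1 := ⟨s - 1, by omega⟩
  rw [Nat.add_sub_cancel, tauN_eq_ceil_sub_floor a (by omega),
    tauN_eq_ceil_sub_floor a (by omega)]
  have key := abs_ceil_add_sub_floor_add_sub_le_one (ceil_sqrt_succ_eq_floor_sqrt_add_one a)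
    (r * √(a + 1 : ℕ)) (r * √a)
  push_cast [add_one_mul] at key ⊢
  convert key using 2
  ring

theorem stmt_4 (a s : ℕ) (ha : 0 < a) (hs : 2 ≤ s) :
    |(tauN s a : ℤ) - (tauN (s-1) a : ℤ)| ≤ 1 :=
  stmt_4_general a s hs
end

section
/- Let a be a positive integer and let n = ⌊√a⌋. If t, t+1, …, t+k are all in T_s(a) (with k ≥ 1), then t−n, t+1−n, …, t+k−1−n are all in T_{s−1}(a). -/
/-- membership in T_s(a) -/
def memT (s a t : ℕ) : Prop := 0 < t ∧ s^2 * a < t^2 ∧ t^2 < s^2 * (a+1)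

/-!
Write `n = ⌊√a⌋` and `u = t + i`. Both bounds compare the ratios `u / s` and `(u - n) / (s - 1)`.
From `s²a < u²` and `n² ≤ a` we get `s n < u`, which is exactly `u / s < (u - n) / (s - 1)`;
from `(u + 1)² < s²(a + 1) ≤ s²(n + 1)²` we get `u + 1 < s (n + 1)`, which is exactly
`(u - n) / (s - 1) < (u + 1) / s`. So `(u - n) / (s - 1)` lies strictly between `u / s` and
`(u + 1) / s`, whose squares bracket `a` and `a + 1`.
-/

theorem sq_mul_lt_sq_of_mul_lt {p q u v X : ℕ} (huv : p * u < q * v) (hX : q ^ 2 * X ≤ u ^ 2) :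
    p ^ 2 * X < v ^ 2 := by
  refine Nat.lt_of_mul_lt_mul_left (a := q ^ 2) ?_
  calc q ^ 2 * (p ^ 2 * X) = p ^ 2 * (q ^ 2 * X) := by ring
    _ ≤ p ^ 2 * u ^ 2 := by gcongr
    _ = (p * u) ^ 2 := by ring
    _ < (q * v) ^ 2 := by gcongr
    _ = q ^ 2 * v ^ 2 := by ring

theorem sq_lt_sq_mul_of_mul_lt {p q v w Y : ℕ} (hvw : q * v < p * w) (hY : w ^ 2 ≤ q ^ 2 * Y) :
    v ^ 2 < p ^ 2 * Y := by
  refine Nat.lt_of_mul_lt_mul_left (a := q ^ 2) ?_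
  calc q ^ 2 * v ^ 2 = (q * v) ^ 2 := by ring
    _ < (p * w) ^ 2 := by gcongr
    _ = p ^ 2 * w ^ 2 := by ring
    _ ≤ p ^ 2 * (q ^ 2 * Y) := by gcongr
    _ = q ^ 2 * (p ^ 2 * Y) := by ring

theorem mul_sqrt_lt_of_sq_mul_lt {c a u : ℕ} (h : c ^ 2 * a < u ^ 2) : c * Nat.sqrt a < u :=
  lt_of_pow_lt_pow_left₀ 2 u.zero_le <| calc
    (c * Nat.sqrt a) ^ 2 = c ^ 2 * Nat.sqrt a ^ 2 := mul_pow ..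
    _ ≤ c ^ 2 * a := by gcongr; exact Nat.sqrt_le' a
    _ < u ^ 2 := h

theorem lt_mul_sqrt_succ_of_lt_sq_mul {c a w : ℕ} (h : w ^ 2 < c ^ 2 * (a + 1)) :
    w < c * (Nat.sqrt a + 1) :=
  lt_of_pow_lt_pow_left₀ 2 (Nat.zero_le _) <| calc
    w ^ 2 < c ^ 2 * (a + 1) := h
    _ ≤ c ^ 2 * (Nat.sqrt a + 1) ^ 2 := by gcongr; exact Nat.lt_succ_sqrt' a
    _ = (c * (Nat.sqrt a + 1)) ^ 2 := (mul_pow ..).symm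

theorem memT_sub_sqrt {s a u : ℕ} (hu : memT (s + 1) a u) (hu' : memT (s + 1) a (u + 1)) :
    memT s a (u - Nat.sqrt a) := by
  set n := Nat.sqrt a
  have hlo : (s + 1) * n < u := mul_sqrt_lt_of_sq_mul_lt hu.2.1
  have hhi : u + 1 < (s + 1) * (n + 1) := lt_mul_sqrt_succ_of_lt_sq_mul hu'.2.2
  obtain ⟨v, rfl⟩ := Nat.exists_eq_add_of_le (by nlinarith : n ≤ u)
  rw [Nat.add_sub_cancel_left]
  refine ⟨by nlinarith, ?_, ?_⟩
  · exact sq_mul_lt_sq_of_mul_lt (u := n + v) (q := s + 1) (by linarith) hu.2.1.le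
  · exact sq_lt_sq_mul_of_mul_lt (w := n + v + 1) (q := s + 1) (by linarith) hu'.2.2.le

theorem memT_zero_left (a t : ℕ) : ¬ memT 0 a t := by
  simp [memT]

theorem stmt_5_general (a n s t k : ℕ) (hn : n = Nat.sqrt a) (hk : 1 ≤ k)
    (h : ∀ i : ℕ, i ≤ k → memT s a (t + i)) :
    ∀ i : ℕ, i ≤ k - 1 → memT (s - 1) a (t + i - n) := by
  intro i hi
  have hs : s ≠ 0 := by
    rintro rfl
    exact memT_zero_left a t (h 0 k.zero_le)
  obtain ⟨r, rfl⟩ := Nat.exists_eq_add_one_of_ne_zero hs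
  subst hn
  exact memT_sub_sqrt (h i (by omega)) (h (i + 1) (by omega))

theorem stmt_5 (a n s t k : ℕ) (ha : 0 < a) (hn : n = Nat.sqrt a)
    (hs : 2 ≤ s) (ht : n < t) (hk : 1 ≤ k)
    (h : ∀ i : ℕ, i ≤ k → memT s a (t + i)) :
    ∀ i : ℕ, i ≤ k - 1 → memT (s - 1) a (t + i - n) :=
  stmt_5_general a n s t k hn hk h
end

section
/- Let a be a positive integer and let n = ⌊√a⌋. If t, t+1, …, t+k are all in T_s(a), then t+1+n, t+2+n, …, t+k+n are all in T_{s+1}(a). -/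
theorem Nat.mul_add_sq_lt_add_sq {b x x' y y' : ℕ} (h : b * x ^ 2 < y ^ 2)
    (h' : b * x' ^ 2 ≤ y' ^ 2) : b * (x + x') ^ 2 < (y + y') ^ 2 := by
  have cross : b * (x * x') ≤ y * y' := by
    refine (Nat.pow_le_pow_iff_left two_ne_zero).mp ?_
    calc (b * (x * x')) ^ 2 = (b * x ^ 2) * (b * x' ^ 2) := by ring
      _ ≤ y ^ 2 * y' ^ 2 := Nat.mul_le_mul h.le h'
      _ = (y * y') ^ 2 := by ring
  nlinarith

theorem Nat.add_sq_lt_mul_add_sq {b x x' y y' : ℕ} (h : y ^ 2 < b * x ^ 2)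
    (h' : y' ^ 2 ≤ b * x' ^ 2) : (y + y') ^ 2 < b * (x + x') ^ 2 := by
  have cross : y * y' ≤ b * (x * x') := by
    refine (Nat.pow_le_pow_iff_left two_ne_zero).mp ?_
    calc (y * y') ^ 2 = y ^ 2 * y' ^ 2 := by ring
      _ ≤ (b * x ^ 2) * (b * x' ^ 2) := Nat.mul_le_mul h.le h'
      _ = (b * (x * x')) ^ 2 := by ring
  nlinarith

theorem stmt_6_general (a n s t k : ℕ) (hn : n = Nat.sqrt a)
    (h : ∀ i : ℕ, i ≤ k → memT s a (t + i)) :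
    ∀ i : ℕ, 1 ≤ i → i ≤ k → memT (s + 1) a (t + i + n) := by
  rintro i hi hik
  obtain ⟨j, rfl⟩ := Nat.exists_eq_add_of_le' hi
  obtain ⟨-, hlow, -⟩ := h j (by omega)
  obtain ⟨-, -, hupp⟩ := h (j + 1) hik
  have hn_sq : n ^ 2 ≤ (a + 1) * 1 ^ 2 := by rw [hn]; linarith [Nat.sqrt_le' a]
  have ha_sq : a * 1 ^ 2 ≤ (n + 1) ^ 2 := by rw [hn]; linarith [Nat.lt_succ_sqrt' a]
  refine ⟨by omega, ?_, ?_⟩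
  · linarith [Nat.mul_add_sq_lt_add_sq (by linarith : a * s ^ 2 < (t + j) ^ 2) ha_sq]
  · linarith [Nat.add_sq_lt_mul_add_sq (by linarith : (t + (j + 1)) ^ 2 < (a + 1) * s ^ 2) hn_sq]

theorem stmt_6 (a n s t k : ℕ) (ha : 0 < a) (hn : n = Nat.sqrt a)
    (h : ∀ i : ℕ, i ≤ k → memT s a (t + i)) :
    ∀ i : ℕ, 1 ≤ i → i ≤ k → memT (s + 1) a (t + i + n) :=
  stmt_6_general a n s t k hn h
end

section
/- Let a be a positive integer and let s be minimal such that the open interval (s^2·a, s^2·(a+1)) contains a perfect square; then that perfect square is unique, i.e., τ_s(a) = 1 at s = σ(a). -/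
/-- σ(a): least s > 0 such that some positive t satisfies s²a < t² < s²(a+1). -/
noncomputable def sigmaN (a : ℕ) : ℕ :=
  sInf {s : ℕ | 0 < s ∧ ∃ t : ℕ, 0 < t ∧ s^2 * a < t^2 ∧ t^2 < s^2 * (a+1)}

/-!
Write `k = ⌊√a⌋` and `s = σ(a)`. If the gap `(s²a, s²(a+1))` contained two squares, it would
contain two consecutive ones, `t²` and `(t+1)²`. Then `sk < t` and `t + 1 < s(k+1)`, and these
two inequalities are exactly what is needed for `(t-k)²` to lie in the gap `((s-1)²a, (s-1)²(a+1))`,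
contradicting the minimality of `s`.
-/

namespace Nat

theorem exists_sq_between {n d : ℕ} (h : 2 * sqrt n + 1 < d) :
    ∃ t, 0 < t ∧ n < t ^ 2 ∧ t ^ 2 < n + d :=
  ⟨sqrt n + 1, succ_pos _, lt_succ_sqrt' n, by nlinarith [sqrt_le' n]⟩

theorem mul_sqrt_lt_of_sq_mul_lt {s a t : ℕ} (h : s ^ 2 * a < t ^ 2) : s * sqrt a < t := by
  refine lt_of_pow_lt_pow_left₀ 2 (zero_le t) (lt_of_le_of_lt ?_ h)
  rw [mul_pow]
  exact Nat.mul_le_mul_left _ (sqrt_le' a)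

theorem lt_mul_sqrt_succ_of_sq_lt {s a t : ℕ} (h : t ^ 2 < s ^ 2 * (a + 1)) :
    t < s * (sqrt a + 1) := by
  refine lt_of_pow_lt_pow_left₀ 2 (zero_le _) (lt_of_lt_of_le h ?_)
  rw [mul_pow]
  exact Nat.mul_le_mul_left _ (lt_succ_sqrt' a)

end Nat

theorem exists_sq_between_scaled (a : ℕ) :
    ∃ s, 0 < s ∧ ∃ t : ℕ, 0 < t ∧ s ^ 2 * a < t ^ 2 ∧ t ^ 2 < s ^ 2 * (a + 1) := by
  set s := 2 * (Nat.sqrt a + 1)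
  have hroot : Nat.sqrt (s ^ 2 * a) < s * (Nat.sqrt a + 1) :=
    Nat.lt_mul_sqrt_succ_of_sq_lt <| (Nat.sqrt_le' _).trans_lt <|
      Nat.mul_lt_mul_of_pos_left (Nat.lt_succ_self a) (by positivity)
  have hs : s ^ 2 = 2 * (s * (Nat.sqrt a + 1)) := by ring
  obtain ⟨t, ht, hlo, hhi⟩ := Nat.exists_sq_between (n := s ^ 2 * a) (d := s ^ 2) (by omega)
  exact ⟨s, by positivity, t, ht, hlo, by linarith⟩

theorem sq_mul_pred_lt_sq_sub {s a t k : ℕ} (hs : 0 < s) (hk : s * k < t)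
    (h : s ^ 2 * a < t ^ 2) : (s - 1) ^ 2 * a < (t - k) ^ 2 := by
  obtain ⟨r, rfl⟩ : ∃ r, s = r + 1 := ⟨s - 1, by omega⟩
  obtain ⟨u, rfl⟩ : ∃ u, t = u + k :=
    ⟨t - k, (Nat.sub_add_cancel ((Nat.le_mul_of_pos_left k hs).trans hk.le)).symm⟩
  simp only [Nat.add_sub_cancel]
  have hmul : r * (u + k) < (r + 1) * u := by nlinarith
  have hsq : (r + 1) ^ 2 * (r ^ 2 * a) < (r + 1) ^ 2 * u ^ 2 := by
    calc (r + 1) ^ 2 * (r ^ 2 * a) = r ^ 2 * ((r + 1) ^ 2 * a) := by ring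
      _ ≤ r ^ 2 * (u + k) ^ 2 := Nat.mul_le_mul_left _ h.le
      _ = (r * (u + k)) ^ 2 := by ring
      _ < ((r + 1) * u) ^ 2 := Nat.pow_lt_pow_left hmul two_ne_zero
      _ = (r + 1) ^ 2 * u ^ 2 := by ring
  exact Nat.lt_of_mul_lt_mul_left hsq

theorem sq_sub_lt_sq_mul_pred {s a t k : ℕ} (hk : k ≤ t) (hks : t + 1 < s * (k + 1))
    (h : (t + 1) ^ 2 < s ^ 2 * (a + 1)) : (t - k) ^ 2 < (s - 1) ^ 2 * (a + 1) := by
  obtain ⟨r, rfl⟩ : ∃ r, s = r + 1 := ⟨s - 1, by cases s <;> simp_all⟩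
  obtain ⟨u, rfl⟩ : ∃ u, t = u + k := ⟨t - k, (Nat.sub_add_cancel hk).symm⟩
  simp only [Nat.add_sub_cancel]
  have hmul : (r + 1) * u < r * (u + k + 1) := by nlinarith
  have hsq : (r + 1) ^ 2 * u ^ 2 < (r + 1) ^ 2 * (r ^ 2 * (a + 1)) := by
    calc (r + 1) ^ 2 * u ^ 2 = ((r + 1) * u) ^ 2 := by ring
      _ < (r * (u + k + 1)) ^ 2 := Nat.pow_lt_pow_left hmul two_ne_zero
      _ = r ^ 2 * (u + k + 1) ^ 2 := by ring
      _ ≤ r ^ 2 * ((r + 1) ^ 2 * (a + 1)) := Nat.mul_le_mul_left _ h.le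
      _ = (r + 1) ^ 2 * (r ^ 2 * (a + 1)) := by ring
  exact Nat.lt_of_mul_lt_mul_left hsq

theorem exists_sq_between_pred {s a t : ℕ} (hs : 0 < s) (hlo : s ^ 2 * a < t ^ 2)
    (hhi : (t + 1) ^ 2 < s ^ 2 * (a + 1)) :
    0 < s - 1 ∧ ∃ t' : ℕ, 0 < t' ∧ (s - 1) ^ 2 * a < t' ^ 2 ∧ t' ^ 2 < (s - 1) ^ 2 * (a + 1) := by
  have hk : s * Nat.sqrt a < t := Nat.mul_sqrt_lt_of_sq_mul_lt hlo
  have hks : t + 1 < s * (Nat.sqrt a + 1) := Nat.lt_mul_sqrt_succ_of_sq_lt hhi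
  have lo := sq_mul_pred_lt_sq_sub hs hk hlo
  have hi := sq_sub_lt_sq_mul_pred ((Nat.le_mul_of_pos_left _ hs).trans hk.le) hks hhi
  refine ⟨Nat.pos_of_ne_zero fun h0 => ?_, t - Nat.sqrt a, Nat.pos_of_ne_zero fun h0 => ?_, lo, hi⟩
  · simp [h0] at hi
  · simp [h0] at lo

theorem sigmaN_spec (a : ℕ) :
    0 < sigmaN a ∧ ∃ t : ℕ, 0 < t ∧ sigmaN a ^ 2 * a < t ^ 2 ∧ t ^ 2 < sigmaN a ^ 2 * (a + 1) :=
  Nat.sInf_mem (exists_sq_between_scaled a)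

theorem not_consecutive_sq_between_sigmaN {a t : ℕ} (hlo : sigmaN a ^ 2 * a < t ^ 2)
    (hhi : (t + 1) ^ 2 < sigmaN a ^ 2 * (a + 1)) : False := by
  have hs := (sigmaN_spec a).1
  have hle : sigmaN a ≤ sigmaN a - 1 := Nat.sInf_le (exists_sq_between_pred hs hlo hhi)
  omega

theorem le_of_sq_between_sigmaN {a t u : ℕ} (ht : sigmaN a ^ 2 * a < t ^ 2)
    (hu : u ^ 2 < sigmaN a ^ 2 * (a + 1)) : u ≤ t := by
  by_contra! htu
  exact not_consecutive_sq_between_sigmaN ht <|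
    (Nat.pow_le_pow_left (Nat.succ_le_of_lt htu) 2).trans_lt hu

theorem stmt_7_general (a : ℕ) : tauN (sigmaN a) a = 1 := by
  obtain ⟨-, t, ht⟩ := sigmaN_spec a
  refine Set.ncard_eq_one.mpr ⟨t, Set.eq_singleton_iff_unique_mem.mpr ⟨ht, ?_⟩⟩
  rintro u ⟨-, hu⟩
  exact le_antisymm (le_of_sq_between_sigmaN ht.2.1 hu.2) (le_of_sq_between_sigmaN hu.1 ht.2.2)

theorem stmt_7 (a : ℕ) (ha : 0 < a) : tauN (sigmaN a) a = 1 :=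
  stmt_7_general a
end

section
/- Let a be a positive integer with n = ⌊√a⌋, write a = n^2 + b with 0 ≤ b ≤ 2n. For positive integers k and s, if s ≤ k·(n + √(a+1))/(b+1), then (s·n + k)^2 ≥ s^2·(a+1). -/
/-! Put `r = √(a+1)`. Since `(r - n)(r + n) = a + 1 - n² = b + 1`, the hypothesis says exactly
`s (r - n) ≤ k`, i.e. `s r ≤ s n + k`; squaring gives the claim. -/

namespace Real

lemma mul_sqrt_le_of_le_mul_div {x y s k : ℝ} (hxy : x ^ 2 < y)
    (h : s ≤ k * (x + √y) / (y - x ^ 2)) : s * √y ≤ s * x + k := by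
  have hy : 0 ≤ y := (sq_nonneg x).trans hxy.le
  have hlt : |x| < √y := lt_sqrt_of_sq_lt (by rwa [sq_abs])
  have hsub : 0 < √y - x := by linarith [le_abs_self x]
  have hadd : 0 < √y + x := by linarith [neg_abs_le x]
  have hfac : y - x ^ 2 = (√y - x) * (√y + x) := by
    linear_combination -sq_sqrt hy
  rw [hfac, add_comm x, mul_div_mul_right _ _ hadd.ne', le_div_iff₀ hsub] at h
  linarith

lemma sq_mul_le_sq_of_le_mul_div {x y s k : ℝ} (hs : 0 ≤ s) (hxy : x ^ 2 < y)
    (h : s ≤ k * (x + √y) / (y - x ^ 2)) : s ^ 2 * y ≤ (s * x + k) ^ 2 := by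
  have hy : 0 ≤ y := (sq_nonneg x).trans hxy.le
  calc s ^ 2 * y = (s * √y) ^ 2 := by rw [mul_pow, sq_sqrt hy]
    _ ≤ (s * x + k) ^ 2 :=
      pow_le_pow_left₀ (by positivity) (mul_sqrt_le_of_le_mul_div hxy h) 2

end Real

theorem stmt_9_general (a n b k s : ℕ)
    (hab : a = n^2 + b)
    (h : (s : ℝ) ≤ k * ((n : ℝ) + Real.sqrt (a+1)) / (b+1)) :
    ((s : ℝ) * n + k)^2 ≥ (s : ℝ)^2 * (a+1) := by
  have hgap : ((a : ℝ) + 1) - (n : ℝ) ^ 2 = b + 1 := by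
    rw [hab]; push_cast; ring
  rw [← hgap] at h
  exact Real.sq_mul_le_sq_of_le_mul_div s.cast_nonneg (by linarith [b.cast_nonneg (α := ℝ)]) h

theorem stmt_9 (a n b k s : ℕ) (ha : 0 < a) (hn : n = Nat.sqrt a)
    (hab : a = n^2 + b) (hb : b ≤ 2*n) (hk : 0 < k) (hs : 0 < s)
    (h : (s : ℝ) ≤ k * ((n : ℝ) + Real.sqrt (a+1)) / (b+1)) :
    ((s : ℝ) * n + k)^2 ≥ (s : ℝ)^2 * (a+1) :=
  stmt_9_general a n b k s hab h
end

section
/- Let a be a positive integer with n = ⌊√a⌋, a = n^2+b (0 ≤ b ≤ 2n) and m = n+1, a = m^2−c (1 ≤ c ≤ 2m−1). If s ≤ max{ k·(n+√(a+1))/(b+1), k·(m+√a)/c }, then τ_s(a) < k, i.e., fewer than k positive integers t satisfy s^2·a < t^2 < s^2·(a+1). -/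
lemma ncard_lt_of_subset_Ioo {S : Set ℕ} {p q k : ℕ} (hk : 0 < k) (hqp : q ≤ p + k)
    (hS : S ⊆ Set.Ioo p q) : S.ncard < k := by
  have := Set.ncard_le_ncard hS
  rw [Set.ncard_Ioo_nat] at this
  omega

lemma mul_sqrt_eq_sqrt_sq_mul {s : ℝ} (hs : 0 ≤ s) (x : ℝ) : s * √x = √(s ^ 2 * x) := by
  rw [Real.sqrt_mul (sq_nonneg s), Real.sqrt_sq hs]

lemma mul_sqrt_le_add_of_le_div {x y s k : ℝ} (hx : 0 ≤ x) (hxy : x < y)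
    (h : s ≤ k * (√x + √y) / (y - x)) : s * √y ≤ s * √x + k := by
  have hsum : 0 < √x + √y := by
    have := Real.sqrt_pos.mpr (hx.trans_lt hxy)
    positivity
  have hdiff : y - x = (√y - √x) * (√x + √y) := by
    nlinarith [Real.sq_sqrt hx, Real.sq_sqrt (hx.trans hxy.le)]
  rw [le_div_iff₀ (sub_pos.mpr hxy), hdiff, ← mul_assoc] at h
  nlinarith [le_of_mul_le_mul_right h hsum]

lemma tauN_lt_of_forall_mem_Ioo {s a p q k : ℕ} (hk : 0 < k) (hqp : q ≤ p + k)
    (h : ∀ t : ℕ, (s : ℝ) * √a < t → (t : ℝ) < s * √(a + 1) → p < t ∧ t < q) :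
    tauN s a < k := by
  refine ncard_lt_of_subset_Ioo hk hqp ?_
  rintro t ⟨-, hlow, hhigh⟩
  have hs : (0 : ℝ) ≤ s := s.cast_nonneg
  refine h t ?_ ?_
  · rw [mul_sqrt_eq_sqrt_sq_mul hs, Real.sqrt_lt (by positivity) t.cast_nonneg]
    exact_mod_cast hlow
  · rw [mul_sqrt_eq_sqrt_sq_mul hs]
    exact Real.lt_sqrt_of_sq_lt (by exact_mod_cast hhigh)

lemma tauN_lt_of_eq_sq_add {a n b k s : ℕ} (hab : a = n ^ 2 + b) (hk : 0 < k)
    (h : (s : ℝ) ≤ k * (n + √(a + 1)) / (b + 1)) : tauN s a < k := by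
  have habR : (a : ℝ) = n ^ 2 + b := by exact_mod_cast hab
  have hb : (0 : ℝ) ≤ b := b.cast_nonneg
  have hupper : (s : ℝ) * √(a + 1) ≤ s * n + k := by
    have := mul_sqrt_le_add_of_le_div (x := (n : ℝ) ^ 2) (y := a + 1) (s := s) (k := k)
      (by positivity) (by linarith)
      (by rwa [Real.sqrt_sq n.cast_nonneg, show (a : ℝ) + 1 - n ^ 2 = b + 1 by linarith])
    rwa [Real.sqrt_sq n.cast_nonneg] at this
  have hlower : (s : ℝ) * n ≤ s * √a :=
    mul_le_mul_of_nonneg_left (Real.le_sqrt_of_sq_le (by linarith)) s.cast_nonneg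
  refine tauN_lt_of_forall_mem_Ioo (p := s * n) hk le_rfl fun t ht1 ht2 => ⟨?_, ?_⟩
  · exact_mod_cast (by linarith : (s : ℝ) * n < t)
  · exact_mod_cast (by linarith : (t : ℝ) < s * n + k)

lemma tauN_lt_of_add_eq_sq {a m c k s : ℕ} (hac : a + c = m ^ 2) (hc : 1 ≤ c) (hk : 0 < k)
    (h : (s : ℝ) ≤ k * (m + √a) / c) : tauN s a < k := by
  have hacR : (a : ℝ) + c = m ^ 2 := by exact_mod_cast hac
  have hcR : (1 : ℝ) ≤ c := by exact_mod_cast hc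
  have hlower : (s : ℝ) * m ≤ s * √a + k := by
    have := mul_sqrt_le_add_of_le_div (x := a) (y := (m : ℝ) ^ 2) (s := s) (k := k)
      (by positivity) (by linarith)
      (by rwa [Real.sqrt_sq m.cast_nonneg, show (m : ℝ) ^ 2 - a = c by linarith, add_comm])
    rwa [Real.sqrt_sq m.cast_nonneg] at this
  have hupper : (s : ℝ) * √(a + 1) ≤ s * m := by
    refine mul_le_mul_of_nonneg_left ?_ s.cast_nonneg
    rw [← Real.sqrt_sq m.cast_nonneg]
    exact Real.sqrt_le_sqrt (by linarith)
  refine tauN_lt_of_forall_mem_Ioo (p := s * m - k) (q := s * m) hk (by omega)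
    fun t ht1 ht2 => ⟨?_, ?_⟩
  · have hmt : s * m < t + k := by exact_mod_cast (by linarith : (s : ℝ) * m < t + k)
    have ht : 0 < t := by exact_mod_cast (by positivity : (0 : ℝ) ≤ s * √a).trans_lt ht1
    omega
  · exact_mod_cast (by linarith : (t : ℝ) < s * m)

theorem stmt_11_general (a n b m c k s : ℕ)
    (hab : a = n^2 + b)
    (hac : a + c = m^2) (hc1 : 1 ≤ c)
    (hk : 0 < k)
    (h : (s : ℝ) ≤ max (k * ((n : ℝ) + Real.sqrt (a+1)) / (b+1))
                       (k * ((m : ℝ) + Real.sqrt a) / c)) :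
    tauN s a < k := by
  rcases le_max_iff.mp h with h | h
  · exact tauN_lt_of_eq_sq_add hab hk h
  · exact tauN_lt_of_add_eq_sq hac hc1 hk h

theorem stmt_11 (a n b m c k s : ℕ) (ha : 0 < a) (hn : n = Nat.sqrt a)
    (hab : a = n^2 + b) (hb : b ≤ 2*n) (hm : m = n + 1)
    (hac : a + c = m^2) (hc1 : 1 ≤ c) (hc2 : c ≤ 2*m - 1)
    (hk : 0 < k) (hs : 0 < s)
    (h : (s : ℝ) ≤ max (k * ((n : ℝ) + Real.sqrt (a+1)) / (b+1))
                       (k * ((m : ℝ) + Real.sqrt a) / c)) :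
    tauN s a < k :=
  stmt_11_general a n b m c k s hab hac hc1 hk h
end

section
/- For every positive integer a, σ(a) ≤ ⌈√a + √(a+1)⌉. -/
/-!
Let `x = √a + √(a+1)`. Since `a(a+1)` lies strictly between the squares `a²` and `(a+1)²`, the
number `x² = 2a + 1 + 2√(a(a+1))` is irrational, hence so is `x`, and `s = ⌈x⌉` satisfies `s > x`.
As `√(a+1) - √a = 1/x`, the interval `(s√a, s√(a+1))` has length `s/x > 1`, so it contains an
integer `t`, which is a witness for `s`.
-/

theorem Nat.not_isSquare_mul_succ {n : ℕ} (hn : 0 < n) : ¬IsSquare (n * (n + 1)) := by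
  rintro ⟨t, ht⟩
  refine Nat.not_exists_sq (m := n) ?_ ?_ ⟨t, ht.symm⟩ <;> nlinarith

theorem irrational_sqrt_add_sqrt_succ {n : ℕ} (hn : 0 < n) :
    Irrational (√(n : ℝ) + √((n : ℝ) + 1)) := by
  have hroot : Irrational √((n * (n + 1) : ℕ) : ℝ) :=
    irrational_sqrt_natCast_iff.mpr (Nat.not_isSquare_mul_succ hn)
  refine Irrational.of_pow 2 ?_
  have hsq : (√(n : ℝ) + √((n : ℝ) + 1)) ^ 2
      = ((2 * n + 1 : ℕ) : ℝ) + ((2 : ℕ) : ℝ) * √((n * (n + 1) : ℕ) : ℝ) := by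
    have h₀ : √(n : ℝ) ^ 2 = n := Real.sq_sqrt n.cast_nonneg
    have h₁ : √((n : ℝ) + 1) ^ 2 = n + 1 := Real.sq_sqrt (by positivity)
    push_cast
    rw [Real.sqrt_mul n.cast_nonneg]
    linear_combination h₀ + h₁
  rw [hsq]
  exact (hroot.natCast_mul two_ne_zero).natCast_add _

theorem Real.sqrt_add_one_sub_sqrt {x : ℝ} (hx : 0 ≤ x) :
    √(x + 1) - √x = (√x + √(x + 1))⁻¹ := by
  refine eq_inv_of_mul_eq_one_left ?_
  linear_combination Real.sq_sqrt (by positivity : 0 ≤ x + 1) - Real.sq_sqrt hx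

theorem Nat.exists_sq_btwn_of_one_lt_sqrt_sub_sqrt {m n : ℕ} (h : 1 < √(n : ℝ) - √(m : ℝ)) :
    ∃ t, 0 < t ∧ m < t ^ 2 ∧ t ^ 2 < n := by
  refine ⟨m.sqrt + 1, m.sqrt.succ_pos, m.lt_succ_sqrt', ?_⟩
  have hlt : ((m.sqrt + 1 : ℕ) : ℝ) < √(n : ℝ) := by
    push_cast
    linarith [Real.nat_sqrt_le_real_sqrt (a := m)]
  exact_mod_cast (Real.lt_sqrt (Nat.cast_nonneg _)).mp hlt

theorem stmt_12 (a : ℕ) (ha : 0 < a) :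
    sigmaN a ≤ ⌈Real.sqrt a + Real.sqrt (a+1)⌉₊ := by
  set x := √(a : ℝ) + √((a : ℝ) + 1)
  set s := ⌈x⌉₊
  have hx : 0 < x := by positivity
  have hxs : x < s := (Nat.le_ceil x).lt_of_ne ((irrational_sqrt_add_sqrt_succ ha).ne_nat s)
  have hs : 0 < s := Nat.ceil_pos.mpr hx
  have hgap : 1 < √((s ^ 2 * (a + 1) : ℕ) : ℝ) - √((s ^ 2 * a : ℕ) : ℝ) := by
    push_cast
    rw [Real.sqrt_mul' _ (by positivity), Real.sqrt_mul' _ (by positivity),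
      Real.sqrt_sq s.cast_nonneg, ← mul_sub, Real.sqrt_add_one_sub_sqrt a.cast_nonneg,
      ← div_eq_mul_inv, one_lt_div hx]
    exact hxs
  obtain ⟨t, ht, hlow, hhigh⟩ := Nat.exists_sq_btwn_of_one_lt_sqrt_sub_sqrt hgap
  exact Nat.sInf_le ⟨hs, t, ht, hlow, hhigh⟩
end

section
/- For every positive integer a with n = ⌊√a⌋, a = n^2+b, m = n+1, a = m^2−c, we have σ(a) ≥ ⌊max{(n+√(a+1))/(b+1), (m+√a)/c}⌋ + 1. -/
theorem Nat.exists_sq_between_of_two_sqrt_add_one_lt {N D : ℕ} (h : 2 * Nat.sqrt N + 1 < D) :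
    ∃ t, N < t ^ 2 ∧ t ^ 2 < N + D := by
  refine ⟨Nat.sqrt N + 1, Nat.lt_succ_sqrt' N, ?_⟩
  have := Nat.sqrt_le' N
  nlinarith

-- Needed because `sInf ∅ = 0`; with `s = 2m` the gap `s²` exceeds `2 √(s² a) + 1`.
theorem exists_sq_strictly_between_sq_mul (a : ℕ) :
    ∃ s : ℕ, 0 < s ∧ ∃ t : ℕ, 0 < t ∧ s ^ 2 * a < t ^ 2 ∧ t ^ 2 < s ^ 2 * (a + 1) := by
  set m := Nat.sqrt a + 1 with hm
  have hsqrt : Nat.sqrt ((2 * m) ^ 2 * a) < 2 * m * m := by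
    rw [Nat.sqrt_lt', mul_pow (2 * m) m]
    exact Nat.mul_lt_mul_of_pos_left (Nat.lt_succ_sqrt' a) (pow_pos (by omega : 0 < 2 * m) 2)
  obtain ⟨t, hlo, hhi⟩ :=
    Nat.exists_sq_between_of_two_sqrt_add_one_lt (D := (2 * m) ^ 2) (by nlinarith)
  refine ⟨2 * m, by omega, t, Nat.pos_of_ne_zero ?_, hlo, by linarith⟩
  rintro rfl
  simp at hlo

theorem Nat.mul_sqrt_lt_of_sq_mul_lt_sq {a s t : ℕ} (h : s ^ 2 * a < t ^ 2) :
    s * Nat.sqrt a < t := by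
  rw [← Nat.pow_lt_pow_iff_left two_ne_zero, mul_pow]
  exact lt_of_le_of_lt (Nat.mul_le_mul_left _ (Nat.sqrt_le' a)) h

theorem Nat.lt_mul_sqrt_add_one_of_sq_lt_sq_mul {a s t : ℕ} (h : t ^ 2 < s ^ 2 * (a + 1)) :
    t < s * (Nat.sqrt a + 1) := by
  rw [← Nat.pow_lt_pow_iff_left two_ne_zero, mul_pow]
  exact lt_of_lt_of_le h (Nat.mul_le_mul_left _ (Nat.lt_succ_sqrt' a))

theorem mul_sqrt_lt_of_sq_mul_lt_sq {x s t : ℝ} (hs : 0 ≤ s) (hx : 0 ≤ x) (ht : 0 ≤ t)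
    (h : s ^ 2 * x < t ^ 2) : s * √x < t := by
  rwa [← pow_lt_pow_iff_left₀ (by positivity) ht two_ne_zero, mul_pow, Real.sq_sqrt hx]

theorem lt_mul_sqrt_of_sq_lt_sq_mul {x s t : ℝ} (hs : 0 ≤ s) (hx : 0 ≤ x) (ht : 0 ≤ t)
    (h : t ^ 2 < s ^ 2 * x) : t < s * √x := by
  rwa [← pow_lt_pow_iff_left₀ ht (by positivity) two_ne_zero, mul_pow, Real.sq_sqrt hx]

theorem add_div_sq_sub_sq_lt {x y s : ℝ} (hs : 0 ≤ s) (hx : 0 ≤ x) (h : 1 < s * (y - x)) :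
    (x + y) / (y ^ 2 - x ^ 2) < s := by
  have hxy : x < y := by nlinarith
  rw [div_lt_iff₀ (by nlinarith), show y ^ 2 - x ^ 2 = (y - x) * (x + y) by ring]
  nlinarith

theorem stmt_13_general (a n b m c : ℕ) (hn : n = Nat.sqrt a)
    (hab : a = n^2 + b) (hm : m = n + 1) (hac : a + c = m^2) :
    ⌊max (((n : ℝ) + Real.sqrt (a+1)) / (b+1)) (((m : ℝ) + Real.sqrt a) / c)⌋₊ + 1
      ≤ sigmaN a := by
  obtain ⟨hs, t, -, hlo, hhi⟩ := sigmaN_spec a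
  set s := sigmaN a
  have hnt : (s : ℝ) * n + 1 ≤ t := by
    exact_mod_cast (hn ▸ Nat.mul_sqrt_lt_of_sq_mul_lt_sq hlo : s * n < t)
  have htm : (t : ℝ) + 1 ≤ s * m := by
    exact_mod_cast (hm ▸ hn ▸ Nat.lt_mul_sqrt_add_one_of_sq_lt_sq_mul hhi : t < s * m)
  have hlo' : (s : ℝ) * √a < t :=
    mul_sqrt_lt_of_sq_mul_lt_sq (by positivity) (by positivity) (by positivity) (by exact_mod_cast hlo)
  have hhi' : (t : ℝ) < s * √(a + 1) :=
    lt_mul_sqrt_of_sq_lt_sq_mul (by positivity) (by positivity) (by positivity) (by exact_mod_cast hhi)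
  have hb : (b : ℝ) + 1 = √(a + 1) ^ 2 - n ^ 2 := by
    have : (a : ℝ) = n ^ 2 + b := by exact_mod_cast hab
    rw [Real.sq_sqrt (by positivity)]; linarith
  have hc : (c : ℝ) = m ^ 2 - √a ^ 2 := by
    have : (a : ℝ) + c = m ^ 2 := by exact_mod_cast hac
    rw [Real.sq_sqrt (by positivity)]; linarith
  rw [Nat.add_one_le_iff, Nat.floor_lt' hs.ne', max_lt_iff, hb, hc]
  constructor
  · exact add_div_sq_sub_sq_lt (by positivity) (by positivity) (by linarith)
  · rw [add_comm (m : ℝ)]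
    exact add_div_sq_sub_sq_lt (by positivity) (by positivity) (by linarith)

theorem stmt_13 (a n b m c : ℕ) (ha : 0 < a) (hn : n = Nat.sqrt a)
    (hab : a = n^2 + b) (hm : m = n + 1) (hac : a + c = m^2) :
    ⌊max (((n : ℝ) + Real.sqrt (a+1)) / (b+1)) (((m : ℝ) + Real.sqrt a) / c)⌋₊ + 1
      ≤ sigmaN a :=
  stmt_13_general a n b m c hn hab hm hac
end

section
/- For every positive integer n, σ(n^2) = 2n+1. -/
/-- Since `t > s m`, already `(s m + 1)^2 < s^2 (m^2 + 1)`, i.e. `2 s m + 1 < s^2`. -/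
theorem two_mul_lt_of_sq_mul_sq_lt_sq_lt {s t m : ℕ} (hlow : s ^ 2 * m ^ 2 < t ^ 2)
    (hup : t ^ 2 < s ^ 2 * (m ^ 2 + 1)) : 2 * m < s := by
  have hst : s * m < t := by
    rw [← mul_pow] at hlow
    exact lt_of_pow_lt_pow_left₀ 2 (Nat.zero_le t) hlow
  have hsq : (s * m + 1) ^ 2 ≤ t ^ 2 := Nat.pow_le_pow_left hst 2
  have hgap : 2 * m * s < s * s := by nlinarith
  exact Nat.lt_of_mul_lt_mul_right hgap

theorem exists_sq_between_sq_mul_of_pos {n : ℕ} (hn : 0 < n) :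
    ∃ t : ℕ, 0 < t ∧ (2 * n + 1) ^ 2 * n ^ 2 < t ^ 2 ∧ t ^ 2 < (2 * n + 1) ^ 2 * (n ^ 2 + 1) :=
  ⟨(2 * n + 1) * n + 1, Nat.succ_pos _, by nlinarith, by nlinarith⟩

theorem stmt_14 (n : ℕ) (hn : 0 < n) : sigmaN (n^2) = 2*n + 1 := by
  have hmem : 2 * n + 1 ∈
      {s : ℕ | 0 < s ∧ ∃ t : ℕ, 0 < t ∧ s^2 * n^2 < t^2 ∧ t^2 < s^2 * (n^2+1)} :=
    ⟨Nat.succ_pos _, exists_sq_between_sq_mul_of_pos hn⟩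
  refine le_antisymm (Nat.sInf_le hmem) (le_csInf ⟨_, hmem⟩ ?_)
  rintro s ⟨-, t, -, hlow, hup⟩
  exact two_mul_lt_of_sq_mul_sq_lt_sq_lt hlow hup
end

section
/- Let n, b ∈ ℤ⁺ with 0 ≤ b ≤ 2n and set a = n^2 + b, and let k be the least integer strictly greater than (n+√(a+1))/(b+1). Then there exists an integer strictly between (n+√(a+1))/(b+1) and (n+√a)/b if and only if there exists an integer strictly between k√a and k√(a+1). -/
/-!
With `α = √a - n` and `β = √(a+1) - n` we have `0 < α < β ≤ 1`, and since `b = α (√a + n)`,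
`b + 1 = β (√(a+1) + n)`, the two interval ends are `β⁻¹` and `α⁻¹`. So `k` is the least integer
above `β⁻¹`, and an integer lies in `(β⁻¹, α⁻¹)` iff `k` does, i.e. iff `k α < 1`. On the other side,
`k √a = k n + k α` and `k √(a+1) = k n + k β` with `1 < k β ≤ 1 + β ≤ 2` by minimality of `k`, so the
only candidate integer between them is `k n + 1`, which works iff `k α < 1`.
-/

theorem inv_sqrt_sub_eq_add_sqrt_div_sub_sq {x c : ℝ} (hx : 0 ≤ x) (h : x ^ 2 < c) :
    (√c - x)⁻¹ = (x + √c) / (c - x ^ 2) := by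
  have hxc : x < √c := (Real.lt_sqrt hx).mpr h
  have hsq : √c ^ 2 = c := Real.sq_sqrt (by nlinarith)
  have hfac : c - x ^ 2 = (√c - x) * (x + √c) := by linear_combination -hsq
  rw [hfac, div_mul_cancel_right₀ (by linarith)]

theorem exists_int_btwn_mul_add_iff (k n : ℤ) (α β : ℝ) :
    (∃ m : ℤ, k * (n + α) < m ∧ m < k * (n + β)) ↔ ∃ m : ℤ, k * α < m ∧ m < k * β := by
  constructor
  · rintro ⟨m, h₁, h₂⟩
    exact ⟨m - k * n, by push_cast; linarith, by push_cast; linarith⟩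
  · rintro ⟨m, h₁, h₂⟩
    exact ⟨m + k * n, by push_cast; linarith, by push_cast; linarith⟩

theorem exists_int_btwn_inv_iff {α β : ℝ} {k : ℤ} (hα : 0 < α) (hαβ : α < β) (hβ : β ≤ 1)
    (hk₁ : β⁻¹ < k) (hk₂ : ∀ j : ℤ, β⁻¹ < j → k ≤ j) :
    (∃ j : ℤ, β⁻¹ < j ∧ (j : ℝ) < α⁻¹) ↔ ∃ m : ℤ, k * α < m ∧ m < k * β := by
  have hβ₀ : 0 < β := hα.trans hαβ
  have hk₀ : (0 : ℝ) < k := (inv_pos.mpr hβ₀).trans hk₁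
  have hkβ : 1 < k * β := (inv_lt_iff_one_lt_mul₀ hβ₀).mp hk₁
  constructor
  · rintro ⟨j, hj₁, hj₂⟩
    have hkj : (k : ℝ) ≤ j := by exact_mod_cast hk₂ j hj₁
    rw [← one_div, lt_div_iff₀ hα] at hj₂
    exact ⟨1, by push_cast; nlinarith, by push_cast; linarith⟩
  · rintro ⟨m, hm₁, hm₂⟩
    have hk_pred : (k - 1 : ℝ) ≤ β⁻¹ := by
      by_contra! h
      have := hk₂ (k - 1) (by push_cast; exact h)
      omega
    have hkβ₂ : k * β ≤ 1 + β := by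
      rw [← one_div, le_div_iff₀ hβ₀] at hk_pred
      linarith
    have hm : m = 1 := by
      have h₀ : (0 : ℝ) < m := (mul_pos hk₀ hα).trans hm₁
      have h₂ : (m : ℝ) < 2 := by linarith
      have : (0 : ℤ) < m := by exact_mod_cast h₀
      have : m < (2 : ℤ) := by exact_mod_cast h₂
      omega
    subst hm
    refine ⟨k, hk₁, ?_⟩
    rw [← one_div, lt_div_iff₀ hα]
    exact_mod_cast hm₁

theorem stmt_18_general (n b a : ℕ) (k : ℤ) (hb : 1 ≤ b) (hb2 : b ≤ 2*n)
    (hab : a = n^2 + b)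
    (hk1 : ((n : ℝ) + Real.sqrt (a+1)) / (b+1) < (k : ℝ))
    (hk2 : ∀ j : ℤ, ((n : ℝ) + Real.sqrt (a+1)) / (b+1) < (j : ℝ) → k ≤ j) :
    (∃ j : ℤ, ((n : ℝ) + Real.sqrt (a+1)) / (b+1) < (j : ℝ) ∧
        (j : ℝ) < ((n : ℝ) + Real.sqrt a) / b) ↔
    (∃ m : ℤ, (k : ℝ) * Real.sqrt a < (m : ℝ) ∧
        (m : ℝ) < (k : ℝ) * Real.sqrt (a+1)) := by
  have ha : (a : ℝ) = n ^ 2 + b := by rw [hab]; push_cast; ring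
  have hb' : (1 : ℝ) ≤ b := by exact_mod_cast hb
  have hb2' : (b : ℝ) ≤ 2 * n := by exact_mod_cast hb2
  have hlo : ((n : ℝ) + √(a + 1)) / (b + 1) = (√(a + 1) - n)⁻¹ := by
    rw [inv_sqrt_sub_eq_add_sqrt_div_sub_sq (Nat.cast_nonneg n) (by linarith),
      show (a + 1 : ℝ) - n ^ 2 = b + 1 by linarith]
  have hhi : ((n : ℝ) + √a) / b = (√a - n)⁻¹ := by
    rw [inv_sqrt_sub_eq_add_sqrt_div_sub_sq (Nat.cast_nonneg n) (by linarith),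
      show (a : ℝ) - n ^ 2 = b by linarith]
  have hα : 0 < √a - n := sub_pos.mpr ((Real.lt_sqrt (Nat.cast_nonneg n)).mpr (by linarith))
  have hαβ : √a - n < √(a + 1) - n := by gcongr; linarith
  have hβ : √(a + 1) - n ≤ 1 := by
    rw [sub_le_iff_le_add', Real.sqrt_le_left (by positivity)]
    nlinarith
  rw [hlo] at hk1 hk2
  rw [hlo, hhi, exists_int_btwn_inv_iff hα hαβ hβ hk1 hk2,
    ← exists_int_btwn_mul_add_iff k n, Int.cast_natCast]
  simp only [add_sub_cancel]

theorem stmt_18 (n b a : ℕ) (k : ℤ) (hn : 0 < n) (hb : 1 ≤ b) (hb2 : b ≤ 2*n)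
    (hab : a = n^2 + b) (hns : ¬ ∃ r : ℕ, a = r^2)
    (hk1 : ((n : ℝ) + Real.sqrt (a+1)) / (b+1) < (k : ℝ))
    (hk2 : ∀ j : ℤ, ((n : ℝ) + Real.sqrt (a+1)) / (b+1) < (j : ℝ) → k ≤ j) :
    (∃ j : ℤ, ((n : ℝ) + Real.sqrt (a+1)) / (b+1) < (j : ℝ) ∧
        (j : ℝ) < ((n : ℝ) + Real.sqrt a) / b) ↔
    (∃ m : ℤ, (k : ℝ) * Real.sqrt a < (m : ℝ) ∧
        (m : ℝ) < (k : ℝ) * Real.sqrt (a+1)) :=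
  stmt_18_general n b a k hb hb2 hab hk1 hk2
end

section
/- If a = n^2 or a = n^2 − 1 for a positive integer n, then the sequence τ_s(a) is non-decreasing in s: for all s ≥ 1, τ_{s+1}(a) ≥ τ_s(a). In particular, if s√a < t < s√(a+1) for a positive integer t, then (s+1)√a < t+n < (s+1)√(a+1). -/
/-!
Under `a ≤ n² ≤ a + 1`, i.e. `√a ≤ n ≤ √(a + 1)`, translating by `n` maps the open interval
`(s√a, s√(a+1))` into `((s+1)√a, (s+1)√(a+1))`, since the endpoints move by `√a ≤ n` and
`√(a+1) ≥ n` respectively. So `t ↦ t + n` injects the integers counted by `τ_s(a)` into those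
counted by `τ_{s+1}(a)`.
-/

open Real

theorem sq_mul_lt_sq_iff_mul_sqrt_lt (s t a : ℕ) : s ^ 2 * a < t ^ 2 ↔ (s : ℝ) * √a < t := by
  rw [← pow_lt_pow_iff_left₀ (by positivity : (0 : ℝ) ≤ s * √a) (Nat.cast_nonneg t) two_ne_zero,
    mul_pow, sq_sqrt (Nat.cast_nonneg a)]
  exact_mod_cast Iff.rfl

theorem sq_lt_sq_mul_succ_iff_lt_mul_sqrt (s t a : ℕ) :
    t ^ 2 < s ^ 2 * (a + 1) ↔ (t : ℝ) < s * √(a + 1) := by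
  rw [← pow_lt_pow_iff_left₀ (Nat.cast_nonneg t) (by positivity : (0 : ℝ) ≤ s * √(a + 1))
    two_ne_zero, mul_pow, sq_sqrt (by positivity)]
  exact_mod_cast Iff.rfl

theorem sqrt_le_and_le_sqrt_add_one {a n : ℕ} (h : a = n ^ 2 ∨ a + 1 = n ^ 2) :
    √a ≤ n ∧ (n : ℝ) ≤ √(a + 1) := by
  rw [sqrt_le_left (Nat.cast_nonneg n), le_sqrt (Nat.cast_nonneg n) (by positivity)]
  constructor <;> norm_cast <;> omega

theorem mul_sqrt_lt_add_and_add_lt_mul_sqrt {a n : ℕ} (h : a = n ^ 2 ∨ a + 1 = n ^ 2) {s t : ℕ}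
    (h₁ : (s : ℝ) * √a < t) (h₂ : (t : ℝ) < s * √(a + 1)) :
    ((s : ℝ) + 1) * √a < t + n ∧ ((t : ℝ) + n) < ((s : ℝ) + 1) * √(a + 1) := by
  obtain ⟨h₃, h₄⟩ := sqrt_le_and_le_sqrt_add_one h
  constructor <;> linarith

theorem tauN_le_tauN_succ {a n : ℕ} (h : a = n ^ 2 ∨ a + 1 = n ^ 2) (s : ℕ) :
    tauN s a ≤ tauN (s + 1) a := by
  refine Set.ncard_le_ncard_of_injOn (· + n) ?_ (fun _ _ _ _ ↦ Nat.add_right_cancel) ?_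
  · rintro t ⟨ht, h₁, h₂⟩
    rw [sq_mul_lt_sq_iff_mul_sqrt_lt] at h₁
    rw [sq_lt_sq_mul_succ_iff_lt_mul_sqrt] at h₂
    obtain ⟨h₃, h₄⟩ := mul_sqrt_lt_add_and_add_lt_mul_sqrt h h₁ h₂
    refine ⟨by omega, ?_, ?_⟩
    · rw [sq_mul_lt_sq_iff_mul_sqrt_lt]; push_cast; exact h₃
    · rw [sq_lt_sq_mul_succ_iff_lt_mul_sqrt]; push_cast; exact h₄
  · refine (Set.finite_Iio ((s + 1) ^ 2 * (a + 1))).subset fun t ⟨_, _, ht⟩ ↦ ?_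
    exact (Nat.le_self_pow two_ne_zero t).trans_lt ht

theorem stmt_19_general (a n : ℕ)
    (h : a = n^2 ∨ a + 1 = n^2) :
    (∀ s : ℕ, 1 ≤ s → tauN s a ≤ tauN (s+1) a) ∧
    (∀ s t : ℕ, 0 < t →
      (s : ℝ) * Real.sqrt a < t → (t : ℝ) < s * Real.sqrt (a+1) →
      ((s : ℝ) + 1) * Real.sqrt a < t + n ∧
        ((t : ℝ) + n) < ((s : ℝ) + 1) * Real.sqrt (a+1)) :=
  ⟨fun s _ ↦ tauN_le_tauN_succ h s, fun _ _ _ ↦ mul_sqrt_lt_add_and_add_lt_mul_sqrt h⟩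

theorem stmt_19 (a n : ℕ) (hn : 0 < n) (ha : 1 ≤ a)
    (h : a = n^2 ∨ a + 1 = n^2) :
    (∀ s : ℕ, 1 ≤ s → tauN s a ≤ tauN (s+1) a) ∧
    (∀ s t : ℕ, 0 < t →
      (s : ℝ) * Real.sqrt a < t → (t : ℝ) < s * Real.sqrt (a+1) →
      ((s : ℝ) + 1) * Real.sqrt a < t + n ∧
        ((t : ℝ) + n) < ((s : ℝ) + 1) * Real.sqrt (a+1)) :=
  stmt_19_general a n h
end
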